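/- Two iterations of min-sum decoding (one row iteration followed by one column iteration) of the product code C₁ ⊗ C₂ recover the transmitted codeword whenever the number of bit errors is strictly less than d₁·d₂/2, where d₁, d₂ are the minimum distances of C₁ and C₂. -/
import Mathlib


open Finset

/-- Initial cost functions of min-sum decoding: `κ⁰_{ij}(x) = 0` if the received
symbol at `(i,j)` is `x`, else `1` (valued in `ℕ∞` so that empty minima are `⊤`). -/
def minSumInit {N1 N2 : ℕ} (R : Fin N2 → Fin N1 → ZMod 2) :
    Fin N2 → Fin N1 → ZMod 2 → ℕ∞ :=
  fun i j x => if R i j = x then 0 else 1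

/-- A row iteration of min-sum decoding for the product code with row code `C1`:
`κ^{out}_{ij}(x) = min_{c ∈ C1, c_j = x} ∑_k κ^{in}_{ik}(c_k)`. -/
noncomputable def rowStep {N1 N2 : ℕ} (C1 : Finset (Fin N1 → ZMod 2))
    (κ : Fin N2 → Fin N1 → ZMod 2 → ℕ∞) : Fin N2 → Fin N1 → ZMod 2 → ℕ∞ :=
  fun i j x => (C1.filter (fun c => c j = x)).inf (fun c => ∑ k, κ i k (c k))

/-- A column iteration of min-sum decoding for the product code with column code `C2`:
`κ^{out}_{ij}(x) = min_{c ∈ C2, c_i = x} ∑_l κ^{in}_{lj}(c_l)`. -/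
noncomputable def colStep {N1 N2 : ℕ} (C2 : Finset (Fin N2 → ZMod 2))
    (κ : Fin N2 → Fin N1 → ZMod 2 → ℕ∞) : Fin N2 → Fin N1 → ZMod 2 → ℕ∞ :=
  fun i j x => (C2.filter (fun c => c i = x)).inf (fun c => ∑ l, κ l j (c l))

lemma zmod2_ne_iff : ∀ x y : ZMod 2, x ≠ y → x = y + 1 := by decide

lemma zmod2_add_one_ne : ∀ y : ZMod 2, y + 1 ≠ y := by decide

lemma sum_minSumInit {N1 N2 : ℕ} (R : Fin N2 → Fin N1 → ZMod 2) (l : Fin N2)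
    (c : Fin N1 → ZMod 2) :
    ∑ k, minSumInit R l k (c k) = (hammingDist (R l) c : ℕ∞) := by
  unfold minSumInit
  rw [hammingDist, Finset.card_filter, Nat.cast_sum]
  apply Finset.sum_congr rfl
  intro k _
  by_cases h : R l k = c k <;> simp [h]

/-- if the received matrix `R` differs from a product codeword `X`
in fewer than `d₁d₂/2` entries, then after one row iteration and one column
iteration of min-sum decoding, every coordinate is decoded to the symbol of `X`
(the cost of `X i j` is strictly smaller than that of the opposite symbol). -/
theorem stmt10 {N1 N2 d1 d2 : ℕ}
    (C1 : Finset (Fin N1 → ZMod 2)) (C2 : Finset (Fin N2 → ZMod 2))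
    (hd1 : ∀ c ∈ C1, ∀ c' ∈ C1, c ≠ c' → d1 ≤ hammingDist c c')
    (hd2 : ∀ c ∈ C2, ∀ c' ∈ C2, c ≠ c' → d2 ≤ hammingDist c c')
    (X : Fin N2 → Fin N1 → ZMod 2)
    (hXrow : ∀ i, X i ∈ C1) (hXcol : ∀ j, (fun i => X i j) ∈ C2)
    (R : Fin N2 → Fin N1 → ZMod 2)
    (herr : 2 * (Finset.univ.filter
        (fun p : Fin N2 × Fin N1 => R p.1 p.2 ≠ X p.1 p.2)).card < d1 * d2) :
    ∀ i j, colStep C2 (rowStep C1 (minSumInit R)) i j (X i j)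
            < colStep C2 (rowStep C1 (minSumInit R)) i j (X i j + 1) := by
  intro i j
  set e : Fin N2 → ℕ := fun l => hammingDist (R l) (X l) with he
  set t : ℕ := ∑ l, e l with ht
  set P : ℕ := d1 * d2 with hP
  have hcard : (Finset.univ.filter
      (fun p : Fin N2 × Fin N1 => R p.1 p.2 ≠ X p.1 p.2)).card = t := by
    simp only [ht, he, hammingDist, Finset.card_filter, Fintype.sum_prod_type]
  rw [hcard] at herr
  set κ1 := rowStep C1 (minSumInit R) with hκ1
  have hA : ∀ l, κ1 l j (X l j) ≤ (e l : ℕ∞) := by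
    intro l
    calc κ1 l j (X l j) ≤ ∑ k, minSumInit R l k (X l k) :=
          Finset.inf_le (by simp [Finset.mem_filter, hXrow l])
      _ = (e l : ℕ∞) := sum_minSumInit R l (X l)
  have hB : ∀ l, ((d1 - e l : ℕ) : ℕ∞) ≤ κ1 l j (X l j + 1) := by
    intro l
    apply Finset.le_inf
    intro c hc
    rw [Finset.mem_filter] at hc
    rw [sum_minSumInit]
    have hne : X l ≠ c := by
      intro h
      exact zmod2_add_one_ne (X l j) (by rw [← hc.2, h])
    have hd : d1 ≤ hammingDist (X l) c := hd1 _ (hXrow l) _ hc.1 hne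
    have htr : hammingDist (X l) c ≤ e l + hammingDist (R l) c := by
      calc hammingDist (X l) c
          ≤ hammingDist (X l) (R l) + hammingDist (R l) c :=
            hammingDist_triangle _ _ _
        _ = e l + hammingDist (R l) c := by rw [he]; rw [hammingDist_comm]
    exact Nat.cast_le.mpr (by omega)
  have hub : colStep C2 κ1 i j (X i j) ≤ (t : ℕ∞) := by
    calc colStep C2 κ1 i j (X i j) ≤ ∑ l, κ1 l j (X l j) :=
          Finset.inf_le (by simp [Finset.mem_filter, hXcol j])
      _ ≤ ∑ l, (e l : ℕ∞) := Finset.sum_le_sum (fun l _ => hA l)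
      _ = (t : ℕ∞) := by rw [ht, Nat.cast_sum]
  have hlb : ((t + 1 : ℕ) : ℕ∞) ≤ colStep C2 κ1 i j (X i j + 1) := by
    apply Finset.le_inf
    intro c hc
    rw [Finset.mem_filter] at hc
    set S := Finset.univ.filter (fun l => c l ≠ X l j) with hS
    have hcne : c ≠ fun l => X l j := by
      intro h
      exact zmod2_add_one_ne (X i j) (by rw [← hc.2, h])
    have hScard : d2 ≤ S.card := by
      have h := hd2 c hc.1 _ (hXcol j) hcne
      rwa [hammingDist] at h
    have hterm : ∀ l ∈ S, ((d1 - e l : ℕ) : ℕ∞) ≤ κ1 l j (c l) := by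
      intro l hl
      have hcl : c l = X l j + 1 :=
        zmod2_ne_iff _ _ (by simpa [hS] using hl)
      rw [hcl]
      exact hB l
    have hnat : t + 1 ≤ ∑ l ∈ S, (d1 - e l) := by
      have h1 : S.card * d1 ≤ (∑ l ∈ S, (d1 - e l)) + ∑ l ∈ S, e l := by
        rw [← Finset.sum_add_distrib]
        calc S.card * d1 = ∑ _l ∈ S, d1 := by rw [Finset.sum_const, smul_eq_mul]
          _ ≤ _ := Finset.sum_le_sum (fun l _ => by omega)
      have h2 : ∑ l ∈ S, e l ≤ t := by
        rw [ht]
        exact Finset.sum_le_sum_of_subset (Finset.subset_univ S)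
      have h3 : d2 * d1 ≤ S.card * d1 := Nat.mul_le_mul_right _ hScard
      have h4 : P = d2 * d1 := by rw [hP, Nat.mul_comm]
      omega
    calc ((t + 1 : ℕ) : ℕ∞) ≤ ((∑ l ∈ S, (d1 - e l) : ℕ) : ℕ∞) :=
          Nat.cast_le.mpr hnat
      _ = ∑ l ∈ S, ((d1 - e l : ℕ) : ℕ∞) := Nat.cast_sum _ _
      _ ≤ ∑ l ∈ S, κ1 l j (c l) := Finset.sum_le_sum hterm
      _ ≤ ∑ l, κ1 l j (c l) := Finset.sum_le_sum_of_subset (Finset.subset_univ S)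
  refine lt_of_le_of_lt hub (lt_of_lt_of_le ?_ hlb)
  exact_mod_cast Nat.lt_succ_self t
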